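/- Fluctuation–stabilization estimate used in the stability proof: Let d ≥ 1, let w'_1,…,w'_J : ℝ^d → ℝ^d be C¹ compactly supported vector fields with div w'_j = 0 everywhere for each j, and let v, ṽ : ℝ^d → ℝ^d be C¹ compactly supported vector fields. Define l(x) := max_{1≤j≤J} |w'_j(x)|. Then for each j ∈ {1,…,J}: |b(w'_j, v, ṽ)| ≤ (∫_{ℝ^d} l(x)²·‖Dṽ(x)‖_F² dx)^{1/2} · ‖ṽ − v‖. -/

import Mathlib

open MeasureTheory Finset RealInnerProductSpace

noncomputable section

abbrev Euc (d : ℕ) := EuclideanSpace ℝ (Fin d)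

def eb {d : ℕ} (i : Fin d) : Euc d := EuclideanSpace.single i 1

def frobInner {d : ℕ} (A B : Euc d →L[ℝ] Euc d) : ℝ :=
  ∑ i : Fin d, ⟪A (eb i), B (eb i)⟫

/-- Frobenius norm of a linear map on `Euc d`. -/
def frobNorm {d : ℕ} (A : Euc d →L[ℝ] Euc d) : ℝ := Real.sqrt (frobInner A A)

def l2norm {d : ℕ} (φ : Euc d → Euc d) : ℝ := Real.sqrt (∫ x, ‖φ x‖^2)

def divg {d : ℕ} (φ : Euc d → Euc d) (x : Euc d) : ℝ :=
  ∑ i : Fin d, ⟪fderiv ℝ φ x (eb i), eb i⟫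

def triForm {d : ℕ} (u v w : Euc d → Euc d) : ℝ :=
  ∫ x, ⟪fderiv ℝ v x (u x), w x⟫

/-!
Because `w` is divergence free and compactly supported, integrating `∂_w ⟪a, b⟫` by parts
in each coordinate shows that `b(w, ·, ·)` is antisymmetric on `C¹` fields. Hence
`b(w, ṽ, ṽ) = 0` and `b(w, v, ṽ) = ∫ ⟪Dṽ w, ṽ - v⟫`. Pointwise
`|⟪Dṽ w, ṽ - v⟫| ≤ l ‖Dṽ‖_F |ṽ - v|`, and Cauchy–Schwarz in `L²` gives the estimate.
-/

lemma map_eq_sum_smul_map_eb {d : ℕ} {F G : Type*} [AddCommMonoid F] [Module ℝ F]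
    [FunLike G (Euc d) F] [LinearMapClass G ℝ (Euc d) F] (A : G) (u : Euc d) :
    A u = ∑ i, u i • A (eb i) := by
  conv_lhs => rw [← (EuclideanSpace.basisFun (Fin d) ℝ).sum_repr u]
  simp [eb]

lemma frobNorm_eq_sqrt {d : ℕ} (A : Euc d →L[ℝ] Euc d) :
    frobNorm A = √(∑ i, ‖A (eb i)‖ ^ 2) := by
  simp only [frobNorm, frobInner, real_inner_self_eq_norm_sq]

lemma frobNorm_zero {d : ℕ} : frobNorm (0 : Euc d →L[ℝ] Euc d) = 0 := by
  simp [frobNorm_eq_sqrt]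

lemma norm_apply_le_frobNorm {d : ℕ} (A : Euc d →L[ℝ] Euc d) (u : Euc d) :
    ‖A u‖ ≤ frobNorm A * ‖u‖ := by
  rw [frobNorm_eq_sqrt, EuclideanSpace.norm_eq u, mul_comm]
  calc ‖A u‖ = ‖∑ i, u i • A (eb i)‖ := congrArg _ (map_eq_sum_smul_map_eb A u)
    _ ≤ ∑ i, ‖u i‖ * ‖A (eb i)‖ := (norm_sum_le _ _).trans_eq (by simp only [norm_smul])
    _ ≤ _ := Real.sum_mul_le_sqrt_mul_sqrt _ _ _

lemma abs_inner_apply_le_frobNorm_mul {d : ℕ} (A : Euc d →L[ℝ] Euc d) (u z : Euc d) :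
    |⟪A u, z⟫| ≤ frobNorm A * ‖u‖ * ‖z‖ :=
  (abs_real_inner_le_norm _ _).trans (by gcongr; exact norm_apply_le_frobNorm A u)

lemma continuous_frobNorm {d : ℕ} : Continuous (frobNorm (d := d)) := by
  simp only [funext frobNorm_eq_sqrt]
  fun_prop

lemma Continuous.ciSup_of_finite {X ι : Type*} [TopologicalSpace X] [Fintype ι] [Nonempty ι]
    {f : ι → X → ℝ} (hf : ∀ i, Continuous (f i)) : Continuous fun x => ⨆ i, f i x := by
  simp only [← Finset.sup'_univ_eq_ciSup]
  exact Continuous.finset_sup'_apply _ fun i _ => hf i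

lemma abs_integral_le_sqrt_mul_sqrt {α : Type*} [MeasurableSpace α] {μ : Measure α}
    {F f g : α → ℝ} (hf : MemLp f 2 μ) (hg : MemLp g 2 μ) (hf0 : 0 ≤ᵐ[μ] f)
    (hg0 : 0 ≤ᵐ[μ] g) (hF : ∀ᵐ x ∂μ, |F x| ≤ f x * g x) :
    |∫ x, F x ∂μ| ≤ √(∫ x, f x ^ 2 ∂μ) * √(∫ x, g x ^ 2 ∂μ) := by
  have holder := integral_mul_le_Lp_mul_Lq_of_nonneg Real.HolderConjugate.two_two hf0 hg0
    (by simpa using hf) (by simpa using hg)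
  simp only [Real.rpow_two, ← Real.sqrt_eq_rpow] at holder
  calc |∫ x, F x ∂μ| ≤ ∫ x, |F x| ∂μ := abs_integral_le_integral_abs
    _ ≤ ∫ x, f x * g x ∂μ :=
      integral_mono_of_nonneg (.of_forall fun x => abs_nonneg _) (hf.integrable_mul hg) hF
    _ ≤ _ := holder

lemma integral_mul_fderiv_eq_neg_fderiv_mul_of_hasCompactSupport {E : Type*}
    [NormedAddCommGroup E] [NormedSpace ℝ E] [FiniteDimensional ℝ E] [MeasurableSpace E]
    [BorelSpace E] {μ : Measure E} [μ.IsAddHaarMeasure] {f g : E → ℝ}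
    (hf : ContDiff ℝ 1 f) (hfs : HasCompactSupport f) (hg : ContDiff ℝ 1 g) (v : E) :
    ∫ x, f x * fderiv ℝ g x v ∂μ = -∫ x, fderiv ℝ f x v * g x ∂μ := by
  have hf' : Continuous (fderiv ℝ f · v) := (hf.continuous_fderiv one_ne_zero).clm_apply
    continuous_const
  have hg' : Continuous (fderiv ℝ g · v) := (hg.continuous_fderiv one_ne_zero).clm_apply
    continuous_const
  exact integral_mul_fderiv_eq_neg_fderiv_mul_of_integrable
    ((hf'.mul hg.continuous).integrable_of_hasCompactSupport
      (hfs.fderiv_apply ℝ v).mul_right)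
    ((hf.continuous.mul hg').integrable_of_hasCompactSupport hfs.mul_right)
    ((hf.continuous.mul hg.continuous).integrable_of_hasCompactSupport hfs.mul_right)
    (fun x _ => hf.differentiable one_ne_zero x) (fun x _ => hg.differentiable one_ne_zero x)

lemma fderiv_apply_coord {d : ℕ} {w : Euc d → Euc d} {x : Euc d} (hw : DifferentiableAt ℝ w x)
    (i : Fin d) (u : Euc d) : fderiv ℝ (fun y => w y i) x u = fderiv ℝ w x u i :=
  congrArg (· u) ((EuclideanSpace.proj i).hasFDerivAt.comp x hw.hasFDerivAt).fderiv

lemma divg_eq_sum_fderiv_coord {d : ℕ} {w : Euc d → Euc d} {x : Euc d}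
    (hw : DifferentiableAt ℝ w x) : divg w x = ∑ i, fderiv ℝ (fun y => w y i) x (eb i) := by
  simp [divg, eb, fderiv_apply_coord hw, EuclideanSpace.inner_single_right]

lemma integral_fderiv_apply_eq_zero_of_divg_eq_zero {d : ℕ} {w : Euc d → Euc d}
    {p : Euc d → ℝ} (hw : ContDiff ℝ 1 w) (hws : HasCompactSupport w)
    (hdiv : ∀ x, divg w x = 0) (hp : ContDiff ℝ 1 p) :
    ∫ x, fderiv ℝ p x (w x) = 0 := by
  have hcoord (i : Fin d) : ContDiff ℝ 1 (fun y => w y i) :=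
    (EuclideanSpace.proj i : Euc d →L[ℝ] ℝ).contDiff.comp hw
  have hcoords (i : Fin d) : HasCompactSupport (fun y => w y i) :=
    hws.comp_left (g := fun v : Euc d => v i) rfl
  have hint (i : Fin d) : Integrable (fun x => w x i * fderiv ℝ p x (eb i)) :=
    ((hcoord i).continuous.mul ((hp.continuous_fderiv one_ne_zero).clm_apply
      continuous_const)).integrable_of_hasCompactSupport (hcoords i).mul_right
  calc ∫ x, fderiv ℝ p x (w x) = ∑ i, ∫ x, w x i * fderiv ℝ p x (eb i) := by
        rw [← integral_finsetSum _ fun i _ => hint i]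
        refine integral_congr_ae (.of_forall fun x => ?_)
        simpa only [smul_eq_mul] using map_eq_sum_smul_map_eb (fderiv ℝ p x) (w x)
    _ = -∑ i, ∫ x, fderiv ℝ (fun y => w y i) x (eb i) * p x := by
        rw [← Finset.sum_neg_distrib]
        exact Finset.sum_congr rfl fun i _ =>
          integral_mul_fderiv_eq_neg_fderiv_mul_of_hasCompactSupport (hcoord i) (hcoords i) hp _
    _ = -∫ x, divg w x * p x := by
        rw [← integral_finsetSum _ fun i _ => ?_]
        · simp only [divg_eq_sum_fderiv_coord (hw.differentiable one_ne_zero _), Finset.sum_mul]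
        exact ((hcoord i).continuous_fderiv one_ne_zero |>.clm_apply continuous_const |>.mul
          hp.continuous).integrable_of_hasCompactSupport ((hcoords i).fderiv_apply ℝ _).mul_right
    _ = 0 := by simp [hdiv]

lemma integrable_inner_fderiv_apply {d : ℕ} {w a b : Euc d → Euc d} (hw : Continuous w)
    (hws : HasCompactSupport w) (ha : ContDiff ℝ 1 a) (hb : Continuous b) :
    Integrable fun x => ⟪fderiv ℝ a x (w x), b x⟫ := by
  have hcont : Continuous fun x => ⟪fderiv ℝ a x (w x), b x⟫ :=
    ((ha.continuous_fderiv one_ne_zero).clm_apply hw).inner hb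
  refine hcont.integrable_of_hasCompactSupport (hws.mono fun x hx hwx => hx ?_)
  simp [hwx]

lemma triForm_swap {d : ℕ} {w a b : Euc d → Euc d} (hw : ContDiff ℝ 1 w)
    (hws : HasCompactSupport w) (hdiv : ∀ x, divg w x = 0) (ha : ContDiff ℝ 1 a)
    (hb : ContDiff ℝ 1 b) : triForm w a b = -triForm w b a := by
  have hsum : triForm w a b + triForm w b a = ∫ x, fderiv ℝ (fun y => ⟪a y, b y⟫) x (w x) := by
    rw [triForm, triForm, ← integral_add (integrable_inner_fderiv_apply hw.continuous hws ha
      hb.continuous) (integrable_inner_fderiv_apply hw.continuous hws hb ha.continuous)]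
    refine integral_congr_ae (.of_forall fun x => ?_)
    dsimp only
    rw [fderiv_inner_apply ℝ (ha.differentiable one_ne_zero x) (hb.differentiable one_ne_zero x),
      real_inner_comm (a x)]
    ring
  linarith [integral_fderiv_apply_eq_zero_of_divg_eq_zero hw hws hdiv (ha.inner ℝ hb)]

lemma triForm_eq_integral_inner_sub {d : ℕ} {w v vt : Euc d → Euc d} (hw : ContDiff ℝ 1 w)
    (hws : HasCompactSupport w) (hdiv : ∀ x, divg w x = 0) (hv : ContDiff ℝ 1 v)
    (hvt : ContDiff ℝ 1 vt) :
    triForm w v vt = ∫ x, ⟪fderiv ℝ vt x (w x), vt x - v x⟫ := by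
  have hvt0 : triForm w vt vt = 0 := by linarith [triForm_swap hw hws hdiv hvt hvt]
  simp only [inner_sub_right]
  rw [integral_sub (integrable_inner_fderiv_apply hw.continuous hws hvt hvt.continuous)
    (integrable_inner_fderiv_apply hw.continuous hws hvt hv.continuous)]
  change _ = triForm w vt vt - triForm w vt v
  rw [hvt0, triForm_swap hw hws hdiv hv hvt, zero_sub]

theorem fluctuation_stabilization_estimate_general
    (d : ℕ) (J : ℕ)
    (w' : Fin J → Euc d → Euc d)
    (hw' : ∀ j, ContDiff ℝ 1 (w' j) ∧ HasCompactSupport (w' j) ∧ ∀ x, divg (w' j) x = 0)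
    (v vt : Euc d → Euc d)
    (hv : ContDiff ℝ 1 v) (hvs : HasCompactSupport v)
    (hvt : ContDiff ℝ 1 vt) (hvts : HasCompactSupport vt)
    (j : Fin J) :
    |triForm (w' j) v vt|
      ≤ Real.sqrt (∫ x, (⨆ i : Fin J, ‖w' i x‖)^2 * frobNorm (fderiv ℝ vt x)^2)
        * l2norm (fun x => vt x - v x) := by
  obtain ⟨hw, hws, hdiv⟩ := hw' j
  have : Nonempty (Fin J) := ⟨j⟩
  set l : Euc d → ℝ := fun x => ⨆ i, ‖w' i x‖
  have hl : Continuous l := Continuous.ciSup_of_finite fun i => (hw' i).1.continuous.norm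
  have hwl (x : Euc d) : ‖w' j x‖ ≤ l x :=
    le_ciSup (Finite.bddAbove_range fun i => ‖w' i x‖) j
  have hDvt : Continuous fun x => frobNorm (fderiv ℝ vt x) :=
    continuous_frobNorm.comp (hvt.continuous_fderiv one_ne_zero)
  have hDvts : HasCompactSupport fun x => frobNorm (fderiv ℝ vt x) :=
    (hvts.fderiv ℝ).comp_left (g := frobNorm) frobNorm_zero
  rw [triForm_eq_integral_inner_sub hw hws hdiv hv hvt, l2norm]
  simp only [← mul_pow]
  refine abs_integral_le_sqrt_mul_sqrt
    ((hl.mul hDvt).memLp_of_hasCompactSupport hDvts.mul_left)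
    ((hvt.continuous.sub hv.continuous).norm.memLp_of_hasCompactSupport (hvts.sub hvs).norm)
    (.of_forall fun x => mul_nonneg ((norm_nonneg _).trans (hwl x)) (Real.sqrt_nonneg _))
    (.of_forall fun x => norm_nonneg _) (.of_forall fun x => ?_)
  calc |⟪fderiv ℝ vt x (w' j x), vt x - v x⟫|
      ≤ frobNorm (fderiv ℝ vt x) * ‖w' j x‖ * ‖vt x - v x‖ :=
        abs_inner_apply_le_frobNorm_mul _ _ _
    _ ≤ frobNorm (fderiv ℝ vt x) * l x * ‖vt x - v x‖ := by
        gcongr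
        exacts [Real.sqrt_nonneg _, hwl x]
    _ = l x * frobNorm (fderiv ℝ vt x) * ‖vt x - v x‖ := by ring

/-- Fluctuation–stabilization estimate used in the stability proof. -/
theorem fluctuation_stabilization_estimate
    (d : ℕ) (hd : 1 ≤ d) (J : ℕ)
    (w' : Fin J → Euc d → Euc d)
    (hw' : ∀ j, ContDiff ℝ 1 (w' j) ∧ HasCompactSupport (w' j) ∧ ∀ x, divg (w' j) x = 0)
    (v vt : Euc d → Euc d)
    (hv : ContDiff ℝ 1 v) (hvs : HasCompactSupport v)
    (hvt : ContDiff ℝ 1 vt) (hvts : HasCompactSupport vt)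
    (j : Fin J) :
    |triForm (w' j) v vt|
      ≤ Real.sqrt (∫ x, (⨆ i : Fin J, ‖w' i x‖)^2 * frobNorm (fderiv ℝ vt x)^2)
        * l2norm (fun x => vt x - v x) :=
  fluctuation_stabilization_estimate_general d J w' hw' v vt hv hvs hvt hvts j
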